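/- arXiv:0812.1363 — 4 statements merged into one kernel-verified Lean document; each statement's English description precedes it below -/
import Mathlib

section
/- Suppose R = 1, let P* > 0, and suppose β1(y0) > 0 for some y0 ∈ [0,m). Define F(s) = exp(−∫_0^s (γ'(y)+μ(y))/γ(y) dy). Then there exists a constant c > 0 such that the function p(s) = c·F(s)·∫_0^s β1(y)/(F(y)γ(y)) dy is continuously differentiable on [0,m], nonnegative, satisfies p(0) = 0, ∫_0^m p(s) ds = P*, and γ(s)p'(s) + (γ'(s)+μ(s))p(s) = β1(s)·∫_0^m β2(y)p(y) dy for all s ∈ [0,m]; i.e., p is an equilibrium profile of the separable model with total population size P*. -/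
open Set MeasureTheory intervalIntegral

/-!
Variation of constants: `G(s) = F(s) ∫_0^s β1/(Fγ)` solves `γ G' + (γ' + μ) G = β1` with
`G(0) = 0`. Since `∫_y^s γ'/γ = log γ(s) - log γ(y)`, the ratio `F(s)/F(y)` equals
`γ(y)/γ(s) · exp(-∫_y^s μ/γ)`, which turns `∫_0^m β2 G` into the double integral defining `R`,
i.e. into `1`. Hence every multiple `p = c G` satisfies `γ p' + (γ' + μ) p = c β1 = β1 ∫ β2 p`,
and `c` is fixed by the total size, which is possible because `∫ G > 0` once `β1 ≢ 0`.
-/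

theorem ContinuousOn.hasDerivWithinAt_integral_Icc {f : ℝ → ℝ} {a b s : ℝ}
    (hf : ContinuousOn f (Icc a b)) (hs : s ∈ Icc a b) :
    HasDerivWithinAt (fun t => ∫ y in a..t, f y) (f s) (Icc a b) s := by
  have : Fact (s ∈ Icc a b) := ⟨hs⟩
  exact integral_hasDerivWithinAt_right
    (hf.mono (uIcc_subset_Icc (left_mem_Icc.2 (hs.1.trans hs.2)) hs)).intervalIntegrable
    (hf.stronglyMeasurableAtFilter_nhdsWithin measurableSet_Icc s) (hf s hs)

theorem hasDerivWithinAt_exp_neg_integral {r : ℝ → ℝ} {a b s : ℝ}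
    (hr : ContinuousOn r (Icc a b)) (hs : s ∈ Icc a b) :
    HasDerivWithinAt (fun t => Real.exp (-∫ y in a..t, r y))
      (-r s * Real.exp (-∫ y in a..s, r y)) (Icc a b) s := by
  simpa [mul_comm] using (hr.hasDerivWithinAt_integral_Icc hs).neg.exp

theorem integral_div_eq_log_sub_log {γ γ' : ℝ → ℝ} {a b : ℝ} (hab : a ≤ b)
    (hγd : ∀ s ∈ Icc a b, HasDerivWithinAt γ (γ' s) (Icc a b) s)
    (hγ'c : ContinuousOn γ' (Icc a b)) (hγpos : ∀ s ∈ Icc a b, 0 < γ s) :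
    ∫ z in a..b, γ' z / γ z = Real.log (γ b) - Real.log (γ a) := by
  have hγc : ContinuousOn γ (Icc a b) := fun s hs => (hγd s hs).continuousWithinAt
  refine integral_eq_sub_of_hasDerivAt_of_le hab
    (hγc.log fun s hs => (hγpos s hs).ne') (fun s hs => ?_)
    ((hγ'c.div hγc fun s hs => (hγpos s hs).ne').intervalIntegrable_of_Icc hab)
  have hs' := Ioo_subset_Icc_self hs
  exact ((hγd s hs').hasDerivAt (Icc_mem_nhds hs.1 hs.2)).log (hγpos s hs').ne'

theorem exp_neg_integral_add_div {γ γ' μ : ℝ → ℝ} {a b : ℝ} (hab : a ≤ b)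
    (hγd : ∀ s ∈ Icc a b, HasDerivWithinAt γ (γ' s) (Icc a b) s)
    (hγ'c : ContinuousOn γ' (Icc a b)) (hγpos : ∀ s ∈ Icc a b, 0 < γ s)
    (hμc : ContinuousOn μ (Icc a b)) :
    Real.exp (-∫ z in a..b, (γ' z + μ z) / γ z)
      = γ a / γ b * Real.exp (-∫ z in a..b, μ z / γ z) := by
  have hγc : ContinuousOn γ (Icc a b) := fun s hs => (hγd s hs).continuousWithinAt
  have hγne : ∀ s ∈ Icc a b, γ s ≠ 0 := fun s hs => (hγpos s hs).ne'
  have h1 : IntervalIntegrable (fun z => γ' z / γ z) volume a b :=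
    (hγ'c.div hγc hγne).intervalIntegrable_of_Icc hab
  have h2 : IntervalIntegrable (fun z => μ z / γ z) volume a b :=
    (hμc.div hγc hγne).intervalIntegrable_of_Icc hab
  rw [integral_congr (g := fun z => γ' z / γ z + μ z / γ z) fun z _ => add_div _ _ _,
    integral_add h1 h2,
    integral_div_eq_log_sub_log hab hγd hγ'c hγpos, neg_add, Real.exp_add, neg_sub,
    Real.exp_sub, Real.exp_log (hγpos a (left_mem_Icc.2 hab)),
    Real.exp_log (hγpos b (right_mem_Icc.2 hab))]

noncomputable def equilibriumProfile (F γ β1 : ℝ → ℝ) (s : ℝ) : ℝ :=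
  F s * ∫ y in (0:ℝ)..s, β1 y / (F y * γ y)

section EquilibriumProfile

variable {F γ β1 : ℝ → ℝ} {m : ℝ}

theorem continuousOn_equilibriumProfile (hFc : ContinuousOn F (Icc 0 m))
    (hFne : ∀ t ∈ Icc 0 m, F t ≠ 0) (hγc : ContinuousOn γ (Icc 0 m))
    (hγne : ∀ t ∈ Icc 0 m, γ t ≠ 0) (hβ1c : ContinuousOn β1 (Icc 0 m)) :
    ContinuousOn (equilibriumProfile F γ β1) (Icc 0 m) := by
  have hg : ContinuousOn (fun y => β1 y / (F y * γ y)) (Icc 0 m) :=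
    hβ1c.div (hFc.mul hγc) fun t ht => mul_ne_zero (hFne t ht) (hγne t ht)
  exact hFc.mul fun t ht => (hg.hasDerivWithinAt_integral_Icc ht).continuousWithinAt

theorem hasDerivWithinAt_equilibriumProfile {r : ℝ → ℝ} {s : ℝ}
    (hFd : ∀ t ∈ Icc 0 m, HasDerivWithinAt F (-r t * F t) (Icc 0 m) t)
    (hFne : ∀ t ∈ Icc 0 m, F t ≠ 0) (hγc : ContinuousOn γ (Icc 0 m))
    (hγne : ∀ t ∈ Icc 0 m, γ t ≠ 0) (hβ1c : ContinuousOn β1 (Icc 0 m)) (hs : s ∈ Icc 0 m) :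
    HasDerivWithinAt (equilibriumProfile F γ β1)
      (-r s * equilibriumProfile F γ β1 s + β1 s / γ s) (Icc 0 m) s := by
  have hFc : ContinuousOn F (Icc 0 m) := fun t ht => (hFd t ht).continuousWithinAt
  have hg : ContinuousOn (fun y => β1 y / (F y * γ y)) (Icc 0 m) :=
    hβ1c.div (hFc.mul hγc) fun t ht => mul_ne_zero (hFne t ht) (hγne t ht)
  refine ((hFd s hs).mul (hg.hasDerivWithinAt_integral_Icc hs)).congr_deriv ?_
  simp only [equilibriumProfile]
  field_simp [hFne s hs, hγne s hs]

theorem equilibriumProfile_nonneg (hFpos : ∀ t ∈ Icc 0 m, 0 < F t)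
    (hγpos : ∀ t ∈ Icc 0 m, 0 < γ t) (hβ1nn : ∀ t ∈ Icc 0 m, 0 ≤ β1 t) {s : ℝ}
    (hs : s ∈ Icc 0 m) : 0 ≤ equilibriumProfile F γ β1 s :=
  mul_nonneg (hFpos s hs).le <| integral_nonneg hs.1 fun y hy =>
    have hy' : y ∈ Icc 0 m := ⟨hy.1, hy.2.trans hs.2⟩
    div_nonneg (hβ1nn y hy') (mul_nonneg (hFpos y hy').le (hγpos y hy').le)

theorem integral_equilibriumProfile_pos (hm : 0 < m) (hFc : ContinuousOn F (Icc 0 m))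
    (hFpos : ∀ t ∈ Icc 0 m, 0 < F t) (hγc : ContinuousOn γ (Icc 0 m))
    (hγpos : ∀ t ∈ Icc 0 m, 0 < γ t) (hβ1c : ContinuousOn β1 (Icc 0 m))
    (hβ1nn : ∀ t ∈ Icc 0 m, 0 ≤ β1 t) (hβ1pos : ∃ y ∈ Icc 0 m, 0 < β1 y) :
    0 < ∫ s in (0:ℝ)..m, equilibriumProfile F γ β1 s := by
  have hFne : ∀ t ∈ Icc 0 m, F t ≠ 0 := fun t ht => (hFpos t ht).ne'
  have hγne : ∀ t ∈ Icc 0 m, γ t ≠ 0 := fun t ht => (hγpos t ht).ne'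
  have hmem : m ∈ Icc 0 m := right_mem_Icc.2 hm.le
  have hmass : 0 < ∫ y in (0:ℝ)..m, β1 y / (F y * γ y) := by
    obtain ⟨y, hy, hβ1y⟩ := hβ1pos
    refine integral_pos hm (hβ1c.div (hFc.mul hγc) fun t ht => mul_ne_zero (hFne t ht)
      (hγne t ht)) (fun t ht => ?_) ⟨y, hy, div_pos hβ1y (mul_pos (hFpos y hy) (hγpos y hy))⟩
    have ht' := Ioc_subset_Icc_self ht
    exact div_nonneg (hβ1nn t ht') (mul_nonneg (hFpos t ht').le (hγpos t ht').le)
  exact integral_pos hm (continuousOn_equilibriumProfile hFc hFne hγc hγne hβ1c)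
    (fun t ht => equilibriumProfile_nonneg hFpos hγpos hβ1nn (Ioc_subset_Icc_self ht))
    ⟨m, hmem, mul_pos (hFpos m hmem) hmass⟩

theorem integral_mul_equilibriumProfile_eq {γ' μ β2 : ℝ → ℝ} (hm : 0 ≤ m)
    (hγd : ∀ s ∈ Icc 0 m, HasDerivWithinAt γ (γ' s) (Icc 0 m) s)
    (hγ'c : ContinuousOn γ' (Icc 0 m)) (hγpos : ∀ s ∈ Icc 0 m, 0 < γ s)
    (hμc : ContinuousOn μ (Icc 0 m))
    (hF : ∀ s, F s = Real.exp (-∫ y in (0:ℝ)..s, (γ' y + μ y) / γ y)) :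
    ∫ s in (0:ℝ)..m, β2 s * equilibriumProfile F γ β1 s =
      ∫ s in (0:ℝ)..m, ∫ y in (0:ℝ)..s,
        (β1 y * β2 s / γ s) * Real.exp (-∫ z in y..s, μ z / γ z) := by
  have hγc : ContinuousOn γ (Icc 0 m) := fun s hs => (hγd s hs).continuousWithinAt
  have hrc : ContinuousOn (fun y => (γ' y + μ y) / γ y) (Icc 0 m) :=
    (hγ'c.add hμc).div hγc fun s hs => (hγpos s hs).ne'
  have hratio : ∀ y s, 0 ≤ y → y ≤ s → s ≤ m →
      F s = F y * (γ y / γ s * Real.exp (-∫ z in y..s, μ z / γ z)) := by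
    intro y s hy hys hs
    have hsub : Icc y s ⊆ Icc 0 m := Icc_subset_Icc hy hs
    rw [hF, hF, ← integral_add_adjacent_intervals (b := y)
      ((hrc.mono (Icc_subset_Icc le_rfl (hys.trans hs))).intervalIntegrable_of_Icc hy)
      ((hrc.mono hsub).intervalIntegrable_of_Icc hys), neg_add, Real.exp_add,
      exp_neg_integral_add_div hys (fun t ht => (hγd t (hsub ht)).mono hsub) (hγ'c.mono hsub)
        (fun t ht => hγpos t (hsub ht)) (hμc.mono hsub)]
  refine integral_congr fun s hs => ?_
  rw [uIcc_of_le hm] at hs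
  rw [equilibriumProfile, ← mul_assoc, ← intervalIntegral.integral_const_mul]
  refine integral_congr fun y hy => ?_
  rw [uIcc_of_le hs.1] at hy
  have hFy : F y ≠ 0 := hF y ▸ (Real.exp_pos _).ne'
  rw [hratio y s hy.1 hy.2 hs.2]
  field_simp [hFy, (hγpos y ⟨hy.1, hy.2.trans hs.2⟩).ne', (hγpos s hs).ne']

end EquilibriumProfile

theorem exists_equilibrium_profile_general (m : ℝ) (hm : 0 < m)
    (γ γ' μ β1 β2 : ℝ → ℝ)
    (hγd : ∀ s ∈ Icc (0:ℝ) m, HasDerivWithinAt γ (γ' s) (Icc 0 m) s)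
    (hγ'c : ContinuousOn γ' (Icc 0 m))
    (hγpos : ∀ s ∈ Icc (0:ℝ) m, 0 < γ s)
    (hμc : ContinuousOn μ (Icc 0 m))
    (hβ1c : ContinuousOn β1 (Icc 0 m)) (hβ1nn : ∀ s ∈ Icc (0:ℝ) m, 0 ≤ β1 s)
    (hR : (∫ s in (0:ℝ)..m, ∫ y in (0:ℝ)..s,
      (β1 y * β2 s / γ s) * Real.exp (-∫ z in y..s, μ z / γ z)) = 1)
    (Pstar : ℝ) (hPstar : 0 < Pstar)
    (hβ1pos : ∃ y0 ∈ Ico (0:ℝ) m, 0 < β1 y0)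
    (F : ℝ → ℝ)
    (hF : ∀ s, F s = Real.exp (-∫ y in (0:ℝ)..s, (γ' y + μ y) / γ y)) :
    ∃ c > (0:ℝ), ∃ p p' : ℝ → ℝ,
      (∀ s, p s = c * F s * ∫ y in (0:ℝ)..s, β1 y / (F y * γ y)) ∧
      ContinuousOn p' (Icc 0 m) ∧
      (∀ s ∈ Icc (0:ℝ) m, HasDerivWithinAt p (p' s) (Icc 0 m) s) ∧
      (∀ s ∈ Icc (0:ℝ) m, 0 ≤ p s) ∧
      p 0 = 0 ∧
      (∫ s in (0:ℝ)..m, p s) = Pstar ∧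
      (∀ s ∈ Icc (0:ℝ) m,
        γ s * p' s + (γ' s + μ s) * p s = β1 s * ∫ y in (0:ℝ)..m, β2 y * p y) := by
  have hγc : ContinuousOn γ (Icc 0 m) := fun s hs => (hγd s hs).continuousWithinAt
  have hγne : ∀ s ∈ Icc (0:ℝ) m, γ s ≠ 0 := fun s hs => (hγpos s hs).ne'
  set r : ℝ → ℝ := fun y => (γ' y + μ y) / γ y
  have hrc : ContinuousOn r (Icc 0 m) := (hγ'c.add hμc).div hγc hγne
  have hFpos : ∀ s, 0 < F s := fun s => hF s ▸ Real.exp_pos _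
  have hFne : ∀ s ∈ Icc (0:ℝ) m, F s ≠ 0 := fun s _ => (hFpos s).ne'
  have hFd : ∀ s ∈ Icc (0:ℝ) m, HasDerivWithinAt F (-r s * F s) (Icc 0 m) s := by
    rw [funext hF]
    exact fun s hs => hasDerivWithinAt_exp_neg_integral hrc hs
  have hFc : ContinuousOn F (Icc 0 m) := fun s hs => (hFd s hs).continuousWithinAt
  set G := equilibriumProfile F γ β1
  have hJ : 0 < ∫ s in (0:ℝ)..m, G s :=
    integral_equilibriumProfile_pos hm hFc (fun s _ => hFpos s) hγc hγpos hβ1c hβ1nn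
      (hβ1pos.imp fun _ => And.imp_left fun h => Ico_subset_Icc_self h)
  have hRG : ∫ s in (0:ℝ)..m, β2 s * G s = 1 :=
    (integral_mul_equilibriumProfile_eq hm.le hγd hγ'c hγpos hμc hF).trans hR
  set c := Pstar / ∫ s in (0:ℝ)..m, G s
  refine ⟨c, div_pos hPstar hJ, fun s => c * G s, fun s => c * (-r s * G s + β1 s / γ s),
    fun s => (mul_assoc _ _ _).symm, ?_, fun s hs => ?_, fun s hs => ?_,
    by simp [G, equilibriumProfile], ?_, fun s hs => ?_⟩
  · exact continuousOn_const.mul ((hrc.neg.mul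
      (continuousOn_equilibriumProfile hFc hFne hγc hγne hβ1c)).add (hβ1c.div hγc hγne))
  · exact (hasDerivWithinAt_equilibriumProfile hFd hFne hγc hγne hβ1c hs).const_mul c
  · exact mul_nonneg (div_pos hPstar hJ).le
      (equilibriumProfile_nonneg (fun s _ => hFpos s) hγpos hβ1nn hs)
  · rw [intervalIntegral.integral_const_mul, div_mul_cancel₀ _ hJ.ne']
  · have hmass : ∫ y in (0:ℝ)..m, β2 y * (c * G y) = c := by
      simp only [mul_left_comm (β2 _), intervalIntegral.integral_const_mul, hRG, mul_one]
    rw [hmass]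
    simp only [r]
    field_simp [hγne s hs]
    ring

/-- If the frozen net reproduction number equals `1`, `P* > 0` and `β1` is positive
somewhere on `[0,m)`, then (a suitable positive multiple of)
`F(s)·∫_0^s β1(y)/(F(y)γ(y)) dy` is an equilibrium profile of the separable model
with total population size `P*`. -/
theorem exists_equilibrium_profile (m : ℝ) (hm : 0 < m)
    (γ γ' μ β1 β2 : ℝ → ℝ)
    (hγd : ∀ s ∈ Icc (0:ℝ) m, HasDerivWithinAt γ (γ' s) (Icc 0 m) s)
    (hγ'c : ContinuousOn γ' (Icc 0 m))
    (hγpos : ∀ s ∈ Icc (0:ℝ) m, 0 < γ s)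
    (hμc : ContinuousOn μ (Icc 0 m)) (hμnn : ∀ s ∈ Icc (0:ℝ) m, 0 ≤ μ s)
    (hβ1c : ContinuousOn β1 (Icc 0 m)) (hβ1nn : ∀ s ∈ Icc (0:ℝ) m, 0 ≤ β1 s)
    (hβ2c : ContinuousOn β2 (Icc 0 m)) (hβ2nn : ∀ s ∈ Icc (0:ℝ) m, 0 ≤ β2 s)
    (hR : (∫ s in (0:ℝ)..m, ∫ y in (0:ℝ)..s,
      (β1 y * β2 s / γ s) * Real.exp (-∫ z in y..s, μ z / γ z)) = 1)
    (Pstar : ℝ) (hPstar : 0 < Pstar)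
    (hβ1pos : ∃ y0 ∈ Ico (0:ℝ) m, 0 < β1 y0)
    (F : ℝ → ℝ)
    (hF : ∀ s, F s = Real.exp (-∫ y in (0:ℝ)..s, (γ' y + μ y) / γ y)) :
    ∃ c > (0:ℝ), ∃ p p' : ℝ → ℝ,
      (∀ s, p s = c * F s * ∫ y in (0:ℝ)..s, β1 y / (F y * γ y)) ∧
      ContinuousOn p' (Icc 0 m) ∧
      (∀ s ∈ Icc (0:ℝ) m, HasDerivWithinAt p (p' s) (Icc 0 m) s) ∧
      (∀ s ∈ Icc (0:ℝ) m, 0 ≤ p s) ∧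
      p 0 = 0 ∧
      (∫ s in (0:ℝ)..m, p s) = Pstar ∧
      (∀ s ∈ Icc (0:ℝ) m,
        γ s * p' s + (γ' s + μ s) * p s = β1 s * ∫ y in (0:ℝ)..m, β2 y * p y) :=
  exists_equilibrium_profile_general m hm γ γ' μ β1 β2 hγd hγ'c hγpos hμc hβ1c hβ1nn hR Pstar hPstar
    hβ1pos F hF
end

section
/- Define K(λ) = ∫_0^m b2(s) ∫_0^s (b1(y)/γ(y)) · exp(−∫_y^s (λ+γ'(z)+μ(z))/γ(z) dz) dy ds for λ ∈ ℝ. Assume there exist y0 < s0 in [0,m] with b1(y0)·b2(s0) > 0. Then K is strictly decreasing on ℝ, K(λ) → 0 as λ → +∞, K(λ) → +∞ as λ → −∞, and the characteristic equation K(λ) = 1 has a unique real solution λ0; moreover λ0 > 0 if K(0) > 1, and λ0 < 0 if K(0) < 1. -/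
open Set MeasureTheory intervalIntegral Filter Topology Interval

/-!
With `a = ∫ 1/γ` and `b = ∫ (γ' + μ)/γ`, the exponent splits as `λ (a s - a y) + (b s - b y)`, so
`K λ = ∫∫_{0 ≤ y ≤ s ≤ m} w(y, s) e^{-λ (a s - a y)}` with `w ≥ 0` continuous and `a` strictly
increasing. Every integrand is nonincreasing in `λ`, strictly near `(y0, s0)` where `w > 0`, so `K`
is strictly decreasing. Off the diagonal the integrand tends to `0` as `λ → ∞`, and dominated
convergence gives `K → 0`. On a rectangle `[y0, v] × [u, s0]` kept away from the diagonal,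
`a s - a y ≥ α > 0`, so `K λ ≥ P e^{-λ α}` for `λ ≤ 0` with `P > 0`, whence `K → ∞` as `λ → -∞`.
The intermediate value theorem then yields the unique root.
-/

theorem tendsto_intervalIntegral_zero_of_antitone {F : ℝ → ℝ → ℝ} {p q : ℝ} (hpq : p ≤ q)
    (hF : ∀ t, ContinuousOn (F t) (Icc p q)) (hF0 : ∀ t, ∀ x ∈ Icc p q, 0 ≤ F t x)
    (hanti : ∀ x ∈ Icc p q, Antitone fun t ↦ F t x)
    (hlim : ∀ x ∈ Ioo p q, Tendsto (fun t ↦ F t x) atTop (𝓝 0)) :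
    Tendsto (fun t ↦ ∫ x in p..q, F t x) atTop (𝓝 0) := by
  have hIoc : ∀ {x}, x ∈ Ι p q → x ∈ Icc p q := fun hx ↦ Ioc_subset_Icc_self (uIoc_of_le hpq ▸ hx)
  simpa using tendsto_integral_filter_of_dominated_convergence (f := fun _ ↦ 0) (F 0)
    (Eventually.of_forall fun t ↦ ((hF t).mono Ioc_subset_Icc_self).aestronglyMeasurable
      measurableSet_Ioc |>.mono_measure (by rw [uIoc_of_le hpq]))
    ((eventually_ge_atTop 0).mono fun t ht ↦ ae_of_all _ fun x hx ↦ by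
      rw [Real.norm_eq_abs, abs_of_nonneg (hF0 t x (hIoc hx))]
      exact hanti x (hIoc hx) ht)
    ((hF 0).intervalIntegrable_of_Icc hpq)
    (((countable_singleton q).ae_notMem volume).mono fun x hxq hx ↦ by
      rw [uIoc_of_le hpq] at hx
      exact hlim x ⟨hx.1, lt_of_le_of_ne hx.2 hxq⟩)

theorem integral_le_integral_of_subinterval {f g : ℝ → ℝ} {p q u v : ℝ} (hpu : p ≤ u)
    (huv : u ≤ v) (hvq : v ≤ q) (hf : ContinuousOn f (Icc p q)) (hg : ContinuousOn g (Icc u v))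
    (hf0 : ∀ x ∈ Icc p q, 0 ≤ f x) (hgf : ∀ x ∈ Icc u v, g x ≤ f x) :
    ∫ x in u..v, g x ≤ ∫ x in p..q, f x := by
  have hsub : Icc u v ⊆ Icc p q := Icc_subset_Icc hpu hvq
  calc ∫ x in u..v, g x ≤ ∫ x in u..v, f x :=
        integral_mono_on huv (hg.intervalIntegrable_of_Icc huv)
          ((hf.mono hsub).intervalIntegrable_of_Icc huv) hgf
    _ ≤ ∫ x in p..q, f x :=
        integral_mono_interval hpu huv hvq
          ((ae_restrict_iff' measurableSet_Ioc).2 (ae_of_all _ fun x hx ↦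
            hf0 x (Ioc_subset_Icc_self hx)))
          (hf.intervalIntegrable_of_Icc (hpu.trans (huv.trans hvq)))

theorem strictMono_primitive_of_pos {f : ℝ → ℝ} (hf : Continuous f) (hpos : ∀ x, 0 < f x)
    (a₀ : ℝ) : StrictMono fun t ↦ ∫ z in a₀..t, f z := fun x y hxy ↦ by
  rw [← sub_pos, integral_interval_sub_left (hf.intervalIntegrable _ _) (hf.intervalIntegrable _ _)]
  exact intervalIntegral_pos_of_pos_on (hf.intervalIntegrable _ _) (fun z _ ↦ hpos z) hxy

theorem antitone_mul_exp_neg_mul {c d : ℝ} (hc : 0 ≤ c) (hd : 0 ≤ d) :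
    Antitone fun lam : ℝ ↦ c * Real.exp (-(lam * d)) := fun _ _ hlam ↦
  mul_le_mul_of_nonneg_left (Real.exp_le_exp.2 (neg_le_neg (mul_le_mul_of_nonneg_right hlam hd))) hc

theorem strictAnti_mul_exp_neg_mul {c d : ℝ} (hc : 0 < c) (hd : 0 < d) :
    StrictAnti fun lam : ℝ ↦ c * Real.exp (-(lam * d)) := fun _ _ hlam ↦
  mul_lt_mul_of_pos_left (Real.exp_lt_exp.2 (neg_lt_neg (mul_lt_mul_of_pos_right hlam hd))) hc

theorem exists_unique_eq_one_of_strictAnti {K : ℝ → ℝ} (hK : Continuous K) (hanti : StrictAnti K)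
    (htop : Tendsto K atTop (𝓝 0)) (hbot : Tendsto K atBot atTop) :
    ∃ lam0 : ℝ, K lam0 = 1 ∧ (∀ lam, K lam = 1 → lam = lam0) ∧
      (1 < K 0 → 0 < lam0) ∧ (K 0 < 1 → lam0 < 0) := by
  obtain ⟨lam0, hlam0⟩ : 1 ∈ range K := mem_range_of_exists_le_of_exists_ge hK
    ((htop.eventually_le_const one_pos).exists) ((hbot.eventually_ge_atTop 1).exists)
  refine ⟨lam0, hlam0, fun lam h ↦ hanti.injective (h.trans hlam0.symm), fun h ↦ ?_, fun h ↦ ?_⟩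
  · rwa [← hlam0, hanti.lt_iff_gt] at h
  · rwa [← hlam0, hanti.lt_iff_gt] at h

noncomputable def sliceLaplace (w : ℝ → ℝ → ℝ) (a : ℝ → ℝ) (lam s : ℝ) : ℝ :=
  ∫ y in (0:ℝ)..s, w y s * Real.exp (-(lam * (a s - a y)))

noncomputable def triangleLaplace (w : ℝ → ℝ → ℝ) (a : ℝ → ℝ) (m lam : ℝ) : ℝ :=
  ∫ s in (0:ℝ)..m, sliceLaplace w a lam s

section TriangleLaplace

variable {w : ℝ → ℝ → ℝ} {a : ℝ → ℝ} {m : ℝ}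

theorem continuous_sliceLaplace (hw : Continuous w.uncurry) (ha : Continuous a) :
    Continuous (sliceLaplace w a).uncurry := by
  unfold sliceLaplace Function.uncurry
  fun_prop

theorem continuous_triangleLaplace (hw : Continuous w.uncurry) (ha : Continuous a) :
    Continuous (triangleLaplace w a m) :=
  continuous_parametric_intervalIntegral_of_continuous' (continuous_sliceLaplace hw ha) 0 m

theorem sliceLaplace_nonneg (hw0 : ∀ s ∈ Icc 0 m, ∀ y ∈ Icc 0 s, 0 ≤ w y s) (lam : ℝ)
    {s : ℝ} (hs : s ∈ Icc 0 m) : 0 ≤ sliceLaplace w a lam s :=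
  integral_nonneg hs.1 fun y hy ↦ mul_nonneg (hw0 s hs y hy) (Real.exp_nonneg _)

theorem antitone_sliceLaplace (hw : Continuous w.uncurry) (ha : Continuous a)
    (hmono : MonotoneOn a (Icc 0 m)) (hw0 : ∀ s ∈ Icc 0 m, ∀ y ∈ Icc 0 s, 0 ≤ w y s)
    {s : ℝ} (hs : s ∈ Icc 0 m) : Antitone fun lam ↦ sliceLaplace w a lam s := by
  intro lam₁ lam₂ hlam
  refine integral_mono_on hs.1 ((by fun_prop : Continuous _).intervalIntegrable _ _)
    ((by fun_prop : Continuous _).intervalIntegrable _ _) fun y hy ↦ ?_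
  exact antitone_mul_exp_neg_mul (hw0 s hs y hy)
    (sub_nonneg.2 (hmono ⟨hy.1, hy.2.trans hs.2⟩ hs hy.2)) hlam

theorem sliceLaplace_lt_sliceLaplace (hw : Continuous w.uncurry) (ha : Continuous a)
    (hmono : StrictMonoOn a (Icc 0 m)) (hw0 : ∀ s ∈ Icc 0 m, ∀ y ∈ Icc 0 s, 0 ≤ w y s)
    {y₀ s₀ : ℝ} (hy₀ : 0 ≤ y₀) (hs₀ : s₀ ≤ m) (hys : y₀ < s₀) (hw₀ : 0 < w y₀ s₀)
    {lam₁ lam₂ : ℝ} (hlam : lam₁ < lam₂) :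
    sliceLaplace w a lam₂ s₀ < sliceLaplace w a lam₁ s₀ := by
  have hs₀m : s₀ ∈ Icc 0 m := ⟨hy₀.trans hys.le, hs₀⟩
  refine integral_lt_integral_of_continuousOn_of_le_of_exists_lt (hy₀.trans_lt hys)
    (by fun_prop) (by fun_prop)
    (fun y hy ↦ antitone_mul_exp_neg_mul (hw0 s₀ hs₀m y (Ioc_subset_Icc_self hy))
      (sub_nonneg.2 (hmono.monotoneOn ⟨hy.1.le, hy.2.trans hs₀⟩ hs₀m hy.2)) hlam.le)
    ⟨y₀, ⟨hy₀, hys.le⟩,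
      strictAnti_mul_exp_neg_mul hw₀ (sub_pos.2 (hmono ⟨hy₀, hys.le.trans hs₀⟩ hs₀m hys)) hlam⟩

theorem strictAnti_triangleLaplace (hw : Continuous w.uncurry) (ha : Continuous a)
    (hmono : StrictMonoOn a (Icc 0 m)) (hw0 : ∀ s ∈ Icc 0 m, ∀ y ∈ Icc 0 s, 0 ≤ w y s)
    {y₀ s₀ : ℝ} (hy₀ : 0 ≤ y₀) (hs₀ : s₀ ≤ m) (hys : y₀ < s₀) (hw₀ : 0 < w y₀ s₀) :
    StrictAnti (triangleLaplace w a m) := fun lam₁ lam₂ hlam ↦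
  integral_lt_integral_of_continuousOn_of_le_of_exists_lt ((hy₀.trans_lt hys).trans_le hs₀)
    ((continuous_sliceLaplace hw ha).uncurry_left lam₂).continuousOn
    ((continuous_sliceLaplace hw ha).uncurry_left lam₁).continuousOn
    (fun _ hs ↦ antitone_sliceLaplace hw ha hmono.monotoneOn hw0 (Ioc_subset_Icc_self hs) hlam.le)
    ⟨s₀, ⟨hy₀.trans hys.le, hs₀⟩, sliceLaplace_lt_sliceLaplace hw ha hmono hw0 hy₀ hs₀ hys hw₀ hlam⟩

theorem tendsto_sliceLaplace_atTop (hw : Continuous w.uncurry) (ha : Continuous a)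
    (hmono : StrictMonoOn a (Icc 0 m)) (hw0 : ∀ s ∈ Icc 0 m, ∀ y ∈ Icc 0 s, 0 ≤ w y s)
    {s : ℝ} (hs : s ∈ Icc 0 m) : Tendsto (fun lam ↦ sliceLaplace w a lam s) atTop (𝓝 0) := by
  have hsub : ∀ {y}, y ∈ Icc 0 s → y ∈ Icc 0 m := fun hy ↦ ⟨hy.1, hy.2.trans hs.2⟩
  refine tendsto_intervalIntegral_zero_of_antitone hs.1 (fun _ ↦ by fun_prop)
    (fun _ y hy ↦ mul_nonneg (hw0 s hs y hy) (Real.exp_nonneg _))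
    (fun y hy ↦ antitone_mul_exp_neg_mul (hw0 s hs y hy)
      (sub_nonneg.2 (hmono.monotoneOn (hsub hy) hs hy.2)))
    fun y hy ↦ ?_
  have hd : 0 < a s - a y := sub_pos.2 (hmono (hsub (Ioo_subset_Icc_self hy)) hs hy.2)
  simpa using (Real.tendsto_exp_neg_atTop_nhds_zero.comp
    (tendsto_id.atTop_mul_const hd)).const_mul (w y s)

theorem tendsto_triangleLaplace_atTop (hm : 0 ≤ m) (hw : Continuous w.uncurry)
    (ha : Continuous a) (hmono : StrictMonoOn a (Icc 0 m))
    (hw0 : ∀ s ∈ Icc 0 m, ∀ y ∈ Icc 0 s, 0 ≤ w y s) :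
    Tendsto (triangleLaplace w a m) atTop (𝓝 0) :=
  tendsto_intervalIntegral_zero_of_antitone hm
    (fun lam ↦ ((continuous_sliceLaplace hw ha).uncurry_left lam).continuousOn)
    (fun lam _ hs ↦ sliceLaplace_nonneg hw0 lam hs)
    (fun _ hs ↦ antitone_sliceLaplace hw ha hmono.monotoneOn hw0 hs)
    fun _ hs ↦ tendsto_sliceLaplace_atTop hw ha hmono hw0 (Ioo_subset_Icc_self hs)


theorem exists_exp_le_triangleLaplace (hw : Continuous w.uncurry) (ha : Continuous a)
    (hmono : StrictMonoOn a (Icc 0 m)) (hw0 : ∀ s ∈ Icc 0 m, ∀ y ∈ Icc 0 s, 0 ≤ w y s)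
    {y₀ s₀ : ℝ} (hy₀ : 0 ≤ y₀) (hs₀ : s₀ ≤ m) (hys : y₀ < s₀) (hw₀ : 0 < w y₀ s₀) :
    ∃ α > 0, ∃ P > 0, ∀ lam ≤ 0, P * Real.exp (-(lam * α)) ≤ triangleLaplace w a m lam := by
  -- the rectangle `[y₀, v] × [u, s₀]` stays off the diagonal: there `a s - a y ≥ a u - a v > 0`
  obtain ⟨v, hv, hvs⟩ := exists_between hys
  obtain ⟨u, hvu, hu⟩ := exists_between hvs
  have hIcc : ∀ {x}, y₀ ≤ x → x ≤ s₀ → x ∈ Icc 0 m := fun h₁ h₂ ↦ ⟨hy₀.trans h₁, h₂.trans hs₀⟩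
  have hvs₀ : v ≤ s₀ := (hvu.trans hu).le
  have huy₀ : y₀ ≤ u := (hv.trans hvu).le
  have hw0' : ∀ s ∈ Icc u s₀, ∀ y ∈ Icc y₀ v, 0 ≤ w y s := fun s hs y hy ↦
    hw0 s (hIcc (huy₀.trans hs.1) hs.2) y ⟨hy₀.trans hy.1, hy.2.trans (hvu.le.trans hs.1)⟩
  have hgap : ∀ s ∈ Icc u s₀, ∀ y ∈ Icc y₀ v, a u - a v ≤ a s - a y := fun s hs y hy ↦
    sub_le_sub (hmono.monotoneOn (hIcc huy₀ hu.le) (hIcc (huy₀.trans hs.1) hs.2) hs.1)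
      (hmono.monotoneOn (hIcc hy.1 (hy.2.trans hvs₀)) (hIcc hv.le hvs₀) hy.2)
  set J := fun s ↦ ∫ y in y₀..v, w y s
  have hJc : Continuous J := by fun_prop
  have hJpos : 0 < J s₀ := integral_pos hv (by fun_prop)
    (fun y hy ↦ hw0' s₀ ⟨hu.le, le_rfl⟩ y (Ioc_subset_Icc_self hy)) ⟨y₀, ⟨le_rfl, hv.le⟩, hw₀⟩
  refine ⟨a u - a v, sub_pos.2 (hmono (hIcc hv.le hvs₀) (hIcc huy₀ hu.le) hvu),
    ∫ s in u..s₀, J s, integral_pos hu hJc.continuousOn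
      (fun s hs ↦ integral_nonneg hv.le (hw0' s (Ioc_subset_Icc_self hs)))
      ⟨s₀, ⟨hu.le, le_rfl⟩, hJpos⟩, fun lam hlam ↦ ?_⟩
  have hslice : ∀ s ∈ Icc u s₀,
      Real.exp (-(lam * (a u - a v))) * J s ≤ sliceLaplace w a lam s := by
    intro s hs
    have hsm : s ∈ Icc 0 m := hIcc (huy₀.trans hs.1) hs.2
    rw [← intervalIntegral.integral_const_mul]
    refine integral_le_integral_of_subinterval hy₀ hv.le (hvu.le.trans hs.1) (by fun_prop)
      (by fun_prop) (fun y hy ↦ mul_nonneg (hw0 s hsm y hy) (Real.exp_nonneg _)) fun y hy ↦ ?_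
    rw [mul_comm]
    exact mul_le_mul_of_nonneg_left (Real.exp_le_exp.2 (neg_le_neg
      (mul_le_mul_of_nonpos_left (hgap s hs y hy) hlam))) (hw0' s hs y hy)
  rw [mul_comm, ← intervalIntegral.integral_const_mul, triangleLaplace]
  exact integral_le_integral_of_subinterval (hy₀.trans huy₀) hu.le hs₀
    ((continuous_sliceLaplace hw ha).uncurry_left lam).continuousOn (by fun_prop)
    (fun s hs ↦ sliceLaplace_nonneg hw0 lam hs) hslice

theorem tendsto_triangleLaplace_atBot (hw : Continuous w.uncurry) (ha : Continuous a)
    (hmono : StrictMonoOn a (Icc 0 m)) (hw0 : ∀ s ∈ Icc 0 m, ∀ y ∈ Icc 0 s, 0 ≤ w y s)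
    {y₀ s₀ : ℝ} (hy₀ : 0 ≤ y₀) (hs₀ : s₀ ≤ m) (hys : y₀ < s₀) (hw₀ : 0 < w y₀ s₀) :
    Tendsto (triangleLaplace w a m) atBot atTop := by
  obtain ⟨α, hα, P, hP, hle⟩ := exists_exp_le_triangleLaplace hw ha hmono hw0 hy₀ hs₀ hys hw₀
  refine tendsto_atTop_mono' atBot ((eventually_le_atBot 0).mono hle) ?_
  exact (Real.tendsto_exp_atTop.comp (tendsto_neg_atBot_atTop.comp
    (tendsto_id.atBot_mul_const hα))).const_mul_atTop hP

end TriangleLaplace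

-- extension by a constant beyond each endpoint, so that continuity on `[0, m]` becomes global
noncomputable def extendIcc {m : ℝ} (hm : 0 ≤ m) (f : ℝ → ℝ) (x : ℝ) : ℝ := f (projIcc 0 m hm x)

section ExtendIcc

variable {m : ℝ} (hm : 0 ≤ m) {f : ℝ → ℝ}

theorem extendIcc_of_mem {x : ℝ} (hx : x ∈ Icc 0 m) : extendIcc hm f x = f x := by
  rw [extendIcc, projIcc_of_mem hm hx]

theorem extendIcc_mem {t : Set ℝ} (hf : MapsTo f (Icc 0 m) t) (x : ℝ) : extendIcc hm f x ∈ t :=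
  hf (projIcc 0 m hm x).2

theorem ContinuousOn.continuous_extendIcc (hf : ContinuousOn f (Icc 0 m)) :
    Continuous (extendIcc hm f) :=
  hf.comp_continuous (continuous_subtype_val.comp continuous_projIcc) fun x ↦ (projIcc 0 m hm x).2

end ExtendIcc

noncomputable def separableKernel (γ f b1 b2 : ℝ → ℝ) (y s : ℝ) : ℝ :=
  b2 s * (b1 y / γ y * Real.exp (-((∫ z in (0:ℝ)..s, f z / γ z) - ∫ z in (0:ℝ)..y, f z / γ z)))

section SeparableKernel

variable {γ f b1 b2 : ℝ → ℝ}

theorem continuous_separableKernel (hγ : Continuous γ) (hγ0 : ∀ x, γ x ≠ 0)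
    (hf : Continuous f) (hb1 : Continuous b1) (hb2 : Continuous b2) :
    Continuous (separableKernel γ f b1 b2).uncurry := by
  unfold separableKernel Function.uncurry
  fun_prop (disch := exact fun _ ↦ hγ0 _)

theorem separableKernel_nonneg (hγ : ∀ x, 0 < γ x) (hb1 : ∀ x, 0 ≤ b1 x) (hb2 : ∀ x, 0 ≤ b2 x)
    (y s : ℝ) : 0 ≤ separableKernel γ f b1 b2 y s :=
  mul_nonneg (hb2 s) (mul_nonneg (div_nonneg (hb1 y) (hγ y).le) (Real.exp_nonneg _))

theorem separableKernel_pos {y s : ℝ} (hγ : 0 < γ y) (hb1 : 0 ≤ b1 y) (hb2 : 0 ≤ b2 s)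
    (hb : 0 < b1 y * b2 s) : 0 < separableKernel γ f b1 b2 y s :=
  mul_pos (pos_of_mul_pos_right hb hb1)
    (mul_pos (div_pos (pos_of_mul_pos_left hb hb2) hγ) (Real.exp_pos _))

theorem integral_exp_integral_eq_triangleLaplace {m : ℝ} (hm : 0 ≤ m)
    (hγc : ContinuousOn γ (Icc 0 m)) (hγpos : ∀ s ∈ Icc 0 m, 0 < γ s)
    (hfc : ContinuousOn f (Icc 0 m)) (lam : ℝ) :
    ∫ s in (0:ℝ)..m, b2 s * ∫ y in (0:ℝ)..s, (b1 y / γ y) *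
        Real.exp (-∫ z in y..s, (lam + f z) / γ z) =
      triangleLaplace
        (separableKernel (extendIcc hm γ) (extendIcc hm f) (extendIcc hm b1) (extendIcc hm b2))
        (fun t ↦ ∫ z in (0:ℝ)..t, (extendIcc hm γ z)⁻¹) m lam := by
  set G := extendIcc hm γ
  set F := extendIcc hm f
  have hG : Continuous G := hγc.continuous_extendIcc hm
  have hG0 : ∀ x, G x ≠ 0 := fun x ↦ (extendIcc_mem (t := Ioi 0) hm hγpos x).ne'
  have hGi : ∀ u v, IntervalIntegrable (fun z ↦ (G z)⁻¹) volume u v :=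
    (hG.inv₀ hG0).intervalIntegrable
  have hFi : ∀ u v, IntervalIntegrable (fun z ↦ F z / G z) volume u v :=
    ((hfc.continuous_extendIcc hm).div hG hG0).intervalIntegrable
  refine integral_congr fun s hs ↦ ?_
  rw [uIcc_of_le hm] at hs
  rw [sliceLaplace, ← intervalIntegral.integral_const_mul]
  refine integral_congr fun y hy ↦ ?_
  rw [uIcc_of_le hs.1] at hy
  have hym : y ∈ Icc 0 m := ⟨hy.1, hy.2.trans hs.2⟩
  have hexponent : ∫ z in y..s, (lam + f z) / γ z =
      lam * ((∫ z in (0:ℝ)..s, (G z)⁻¹) - ∫ z in (0:ℝ)..y, (G z)⁻¹) +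
        ((∫ z in (0:ℝ)..s, F z / G z) - ∫ z in (0:ℝ)..y, F z / G z) := by
    rw [integral_interval_sub_left (hGi _ _) (hGi _ _),
      integral_interval_sub_left (hFi _ _) (hFi _ _), ← intervalIntegral.integral_const_mul,
      ← integral_add ((hGi _ _).const_mul lam) (hFi _ _)]
    refine integral_congr fun z hz ↦ ?_
    simp only [G, F, extendIcc_of_mem hm (uIcc_subset_Icc hym hs hz)]
    ring
  simp only [separableKernel, G, F, extendIcc_of_mem hm hs, extendIcc_of_mem hm hym, hexponent,
    neg_add, Real.exp_add]
  ring

end SeparableKernel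

theorem characteristic_equation_separable_general (m : ℝ) (hm : 0 < m)
    (γ γ' μ b1 b2 : ℝ → ℝ)
    (hγd : ∀ s ∈ Icc (0:ℝ) m, HasDerivWithinAt γ (γ' s) (Icc 0 m) s)
    (hγ'c : ContinuousOn γ' (Icc 0 m))
    (hγpos : ∀ s ∈ Icc (0:ℝ) m, 0 < γ s)
    (hμc : ContinuousOn μ (Icc 0 m))
    (hb1c : ContinuousOn b1 (Icc 0 m)) (hb1nn : ∀ s ∈ Icc (0:ℝ) m, 0 ≤ b1 s)
    (hb2c : ContinuousOn b2 (Icc 0 m)) (hb2nn : ∀ s ∈ Icc (0:ℝ) m, 0 ≤ b2 s)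
    (hpos : ∃ y0 ∈ Icc (0:ℝ) m, ∃ s0 ∈ Icc (0:ℝ) m, y0 < s0 ∧ 0 < b1 y0 * b2 s0)
    (K : ℝ → ℝ)
    (hK : ∀ lam, K lam = ∫ s in (0:ℝ)..m, b2 s * ∫ y in (0:ℝ)..s,
      (b1 y / γ y) * Real.exp (-∫ z in y..s, (lam + γ' z + μ z) / γ z)) :
    StrictAnti K ∧
    Tendsto K atTop (nhds 0) ∧
    Tendsto K atBot atTop ∧
    ∃ lam0 : ℝ, K lam0 = 1 ∧ (∀ lam, K lam = 1 → lam = lam0) ∧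
      (1 < K 0 → 0 < lam0) ∧ (K 0 < 1 → lam0 < 0) := by
  obtain ⟨y₀, hy₀, s₀, hs₀, hys, hb₀⟩ := hpos
  have hγc : ContinuousOn γ (Icc 0 m) := fun x hx ↦ (hγd x hx).continuousWithinAt
  have hfc : ContinuousOn (fun z ↦ γ' z + μ z) (Icc 0 m) := hγ'c.add hμc
  set G := extendIcc hm.le γ
  have hG : ∀ x, 0 < G x := extendIcc_mem (t := Ioi 0) hm.le hγpos
  have hGinv : Continuous fun x ↦ (G x)⁻¹ :=
    (hγc.continuous_extendIcc hm.le).inv₀ fun x ↦ (hG x).ne'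
  set w := separableKernel G (extendIcc hm.le fun z ↦ γ' z + μ z) (extendIcc hm.le b1)
    (extendIcc hm.le b2)
  set a := fun t ↦ ∫ z in (0:ℝ)..t, (G z)⁻¹
  have hKw : K = triangleLaplace w a m := funext fun lam ↦ by
    simpa only [hK, add_assoc] using
      integral_exp_integral_eq_triangleLaplace hm.le hγc hγpos hfc lam
  have hw : Continuous w.uncurry := continuous_separableKernel
    (hγc.continuous_extendIcc hm.le) (fun x ↦ (hG x).ne') (hfc.continuous_extendIcc hm.le)
    (hb1c.continuous_extendIcc hm.le) (hb2c.continuous_extendIcc hm.le)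
  have ha : Continuous a := continuous_primitive hGinv.intervalIntegrable 0
  have hmono : StrictMonoOn a (Icc 0 m) :=
    (strictMono_primitive_of_pos hGinv (fun x ↦ inv_pos.2 (hG x)) 0).strictMonoOn _
  have hb1 : ∀ x, 0 ≤ extendIcc hm.le b1 x := extendIcc_mem (t := Ici 0) hm.le hb1nn
  have hb2 : ∀ x, 0 ≤ extendIcc hm.le b2 x := extendIcc_mem (t := Ici 0) hm.le hb2nn
  have hw0 : ∀ s ∈ Icc 0 m, ∀ y ∈ Icc 0 s, 0 ≤ w y s := fun s _ y _ ↦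
    separableKernel_nonneg hG hb1 hb2 y s
  have hw₀ : 0 < w y₀ s₀ := separableKernel_pos (hG y₀) (hb1 y₀) (hb2 s₀) (by
    rwa [extendIcc_of_mem hm.le hy₀, extendIcc_of_mem hm.le hs₀])
  have hanti := strictAnti_triangleLaplace hw ha hmono hw0 hy₀.1 hs₀.2 hys hw₀
  have htop := tendsto_triangleLaplace_atTop hm.le hw ha hmono hw0
  have hbot := tendsto_triangleLaplace_atBot hw ha hmono hw0 hy₀.1 hs₀.2 hys hw₀
  subst hKw
  exact ⟨hanti, htop, hbot,
    exists_unique_eq_one_of_strictAnti (continuous_triangleLaplace hw ha) hanti htop hbot⟩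

/-- Properties of the characteristic function `K` of the linear operator with
separable fertility: `K` is strictly decreasing, tends to `0` at `+∞` and to `+∞`
at `−∞`, and the characteristic equation `K(λ) = 1` has a unique real solution,
which is positive if `K(0) > 1` and negative if `K(0) < 1`. -/
theorem characteristic_equation_separable (m : ℝ) (hm : 0 < m)
    (γ γ' μ b1 b2 : ℝ → ℝ)
    (hγd : ∀ s ∈ Icc (0:ℝ) m, HasDerivWithinAt γ (γ' s) (Icc 0 m) s)
    (hγ'c : ContinuousOn γ' (Icc 0 m))
    (hγpos : ∀ s ∈ Icc (0:ℝ) m, 0 < γ s)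
    (hμc : ContinuousOn μ (Icc 0 m)) (hμnn : ∀ s ∈ Icc (0:ℝ) m, 0 ≤ μ s)
    (hb1c : ContinuousOn b1 (Icc 0 m)) (hb1nn : ∀ s ∈ Icc (0:ℝ) m, 0 ≤ b1 s)
    (hb2c : ContinuousOn b2 (Icc 0 m)) (hb2nn : ∀ s ∈ Icc (0:ℝ) m, 0 ≤ b2 s)
    (hpos : ∃ y0 ∈ Icc (0:ℝ) m, ∃ s0 ∈ Icc (0:ℝ) m, y0 < s0 ∧ 0 < b1 y0 * b2 s0)
    (K : ℝ → ℝ)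
    (hK : ∀ lam, K lam = ∫ s in (0:ℝ)..m, b2 s * ∫ y in (0:ℝ)..s,
      (b1 y / γ y) * Real.exp (-∫ z in y..s, (lam + γ' z + μ z) / γ z)) :
    StrictAnti K ∧
    Tendsto K atTop (nhds 0) ∧
    Tendsto K atBot atTop ∧
    ∃ lam0 : ℝ, K lam0 = 1 ∧ (∀ lam, K lam = 1 → lam = lam0) ∧
      (1 < K 0 → 0 < lam0) ∧ (K 0 < 1 → lam0 < 0) :=
  characteristic_equation_separable_general m hm γ γ' μ b1 b2 hγd hγ'c hγpos hμc hb1c hb1nn hb2c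
    hb2nn hpos K hK
end

section
/- Let ε > 0 and define K(λ) = ε ∫_0^m exp(−∫_0^s (λ+γ'(σ)+μ(σ))/γ(σ) dσ) · ∫_0^s (1/γ(y)) exp(∫_0^y (λ+γ'(σ)+μ(σ))/γ(σ) dσ) dy ds for λ ∈ ℝ. Then K is strictly decreasing, K(λ) → 0 as λ → +∞, and if K(0) > 1 then there exists a unique λ > 0 with K(λ) = 1. -/
open Set MeasureTheory intervalIntegral Filter

/-!
Write `q = 1/γ`, `p = (γ' + μ)/γ` and let `Q`, `P` be their primitives from `0`. Then
`K(λ) = ε ∫₀ᵐ ∫₀ˢ q(y) exp(λ(Q y - Q s) + (P y - P s)) dy ds`. Since `Q` is strictly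
increasing, the integrand is strictly decreasing in `λ` for `y < s`, so `K` is strictly
decreasing. As `q(y) exp(λ(Q y - Q s))` is the `y`-derivative of `exp(λ(Q y - Q s))/λ`, the
inner integral is at most `e^B/λ` with `B` a bound for `P y - P s` on `[0, m]`, so
`K(λ) = O(1/λ)`. Finally `K` is continuous, and the intermediate value theorem gives the root
of `K = 1`, unique by strict monotonicity.
-/

theorem ContinuousOn.exists_continuous_eqOn_Icc {α β : Type*} [LinearOrder α]
    [TopologicalSpace α] [OrderTopology α] [TopologicalSpace β] {a b : α} (h : a ≤ b)
    {f : α → β} (hf : ContinuousOn f (Icc a b)) :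
    ∃ g : α → β, Continuous g ∧ EqOn g f (Icc a b) ∧ ∀ x, g x ∈ f '' Icc a b :=
  ⟨fun x => f (projIcc a b h x),
    hf.comp_continuous (continuous_subtype_val.comp continuous_projIcc)
      fun x => (projIcc a b h x).2,
    fun x hx => by simp only [projIcc_of_mem h hx], fun x => ⟨_, (projIcc a b h x).2, rfl⟩⟩

theorem strictAnti_intervalIntegral {f : ℝ → ℝ → ℝ} {a b : ℝ} (hab : a < b)
    (hf : ∀ lam, IntervalIntegrable (f lam) volume a b)
    (hanti : ∀ x ∈ Ioo a b, StrictAnti fun lam => f lam x) :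
    StrictAnti fun lam => ∫ x in a..b, f lam x := by
  intro l₁ l₂ hl
  rw [← sub_pos, ← integral_sub (hf l₁) (hf l₂)]
  exact intervalIntegral_pos_of_pos_on ((hf l₁).sub (hf l₂))
    (fun x hx => sub_pos.2 (hanti x hx hl)) hab

theorem StrictAnti.existsUnique_pos_eq_of_tendsto {K : ℝ → ℝ} (hanti : StrictAnti K)
    (hcont : Continuous K) {l c : ℝ} (hlim : Tendsto K atTop (nhds l)) (hlc : l < c)
    (hc : c < K 0) : ∃! lam, 0 < lam ∧ K lam = c := by
  obtain ⟨Λ, hΛ, hΛpos⟩ := ((hlim.eventually_lt_const hlc).and (eventually_gt_atTop 0)).exists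
  obtain ⟨lam, hlam, rfl⟩ := intermediate_value_Icc' hΛpos.le hcont.continuousOn ⟨hΛ.le, hc.le⟩
  have hpos : 0 < lam := hlam.1.lt_of_ne (by rintro rfl; exact lt_irrefl _ hc)
  exact ⟨lam, ⟨hpos, rfl⟩, fun y hy => hanti.injective hy.2⟩

theorem integral_mul_exp_mul_sub {q Q : ℝ → ℝ} (hq : Continuous q)
    (hQ : ∀ x, HasDerivAt Q (q x) x) {lam : ℝ} (hlam : lam ≠ 0) (a b : ℝ) :
    ∫ y in a..b, q y * Real.exp (lam * (Q y - Q b)) =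
      (1 - Real.exp (lam * (Q a - Q b))) / lam := by
  have hderiv : ∀ y ∈ uIcc a b, HasDerivAt (fun y => Real.exp (lam * (Q y - Q b)) / lam)
      (q y * Real.exp (lam * (Q y - Q b))) y := fun y _ => by
    refine ((((hQ y).sub_const (Q b)).const_mul lam).exp.div_const lam).congr_deriv ?_
    field_simp
  have hQc : Continuous Q := Differentiable.continuous fun x => (hQ x).differentiableAt
  have hcont : Continuous fun y => q y * Real.exp (lam * (Q y - Q b)) := by fun_prop
  rw [integral_eq_sub_of_hasDerivAt hderiv (hcont.intervalIntegrable a b), sub_self, mul_zero,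
    Real.exp_zero, sub_div]

noncomputable def charKernel (q Q P : ℝ → ℝ) (lam s y : ℝ) : ℝ :=
  q y * Real.exp (lam * (Q y - Q s) + (P y - P s))

noncomputable def charIntegral (q Q P : ℝ → ℝ) (m lam : ℝ) : ℝ :=
  ∫ s in (0:ℝ)..m, ∫ y in (0:ℝ)..s, charKernel q Q P lam s y

section charIntegral

variable {q Q P : ℝ → ℝ}

theorem integral_charKernel_eq (lam s : ℝ) :
    ∫ y in (0:ℝ)..s, charKernel q Q P lam s y =
      Real.exp (-(lam * Q s + P s)) * ∫ y in (0:ℝ)..s, q y * Real.exp (lam * Q y + P y) := by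
  rw [← intervalIntegral.integral_const_mul]
  congr 1
  funext y
  rw [charKernel, show lam * (Q y - Q s) + (P y - P s) = -(lam * Q s + P s) + (lam * Q y + P y)
    by ring, Real.exp_add]
  ring

theorem charKernel_strictAnti {s y : ℝ} (hqy : 0 < q y) (hQ : Q y < Q s) :
    StrictAnti fun lam => charKernel q Q P lam s y := by
  intro a b hab
  have : b * (Q y - Q s) < a * (Q y - Q s) := mul_lt_mul_of_neg_right hab (sub_neg.2 hQ)
  exact mul_lt_mul_of_pos_left (Real.exp_lt_exp.2 (by linarith)) hqy

variable (hq : Continuous q) (hP : Continuous P)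
include hq hP

theorem continuous_integral_charKernel (hQ : Continuous Q) :
    Continuous fun x : ℝ × ℝ => ∫ y in (0:ℝ)..x.2, charKernel q Q P x.1 x.2 y := by
  refine continuous_parametric_intervalIntegral_of_continuous ?_ continuous_snd
  unfold charKernel
  fun_prop

theorem continuous_charIntegral (hQ : Continuous Q) (m : ℝ) : Continuous (charIntegral q Q P m) :=
  continuous_parametric_intervalIntegral_of_continuous'
    (continuous_integral_charKernel hq hP hQ) 0 m

theorem intervalIntegrable_integral_charKernel (hQ : Continuous Q) (lam a b : ℝ) :
    IntervalIntegrable (fun s => ∫ y in (0:ℝ)..s, charKernel q Q P lam s y) volume a b :=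
  ((continuous_integral_charKernel hq hP hQ).comp
    (continuous_const.prodMk continuous_id)).intervalIntegrable a b

theorem intervalIntegrable_charKernel (hQ : Continuous Q) (lam s a b : ℝ) :
    IntervalIntegrable (charKernel q Q P lam s) volume a b := by
  refine Continuous.intervalIntegrable ?_ a b
  unfold charKernel
  fun_prop

variable (hQ : ∀ x, HasDerivAt Q (q x) x) (hqpos : ∀ x, 0 < q x)
include hQ hqpos

theorem charIntegral_strictAnti {m : ℝ} (hm : 0 < m) : StrictAnti (charIntegral q Q P m) := by
  have hQc : Continuous Q := Differentiable.continuous fun x => (hQ x).differentiableAt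
  have hQmono : StrictMono Q := strictMono_of_hasDerivAt_pos hQ hqpos
  refine strictAnti_intervalIntegral hm
    (fun lam => intervalIntegrable_integral_charKernel hq hP hQc lam 0 m) fun s hs => ?_
  exact strictAnti_intervalIntegral hs.1
    (fun lam => intervalIntegrable_charKernel hq hP hQc lam s 0 s)
    fun y hy => charKernel_strictAnti (hqpos y) (hQmono hy.2)

theorem integral_charKernel_le {s B lam : ℝ} (hs : 0 ≤ s) (hlam : 0 < lam)
    (hB : ∀ y ∈ Icc 0 s, P y - P s ≤ B) :
    ∫ y in (0:ℝ)..s, charKernel q Q P lam s y ≤ Real.exp B / lam := by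
  have hQc : Continuous Q := Differentiable.continuous fun x => (hQ x).differentiableAt
  calc ∫ y in (0:ℝ)..s, charKernel q Q P lam s y
      ≤ ∫ y in (0:ℝ)..s, Real.exp B * (q y * Real.exp (lam * (Q y - Q s))) := by
        refine integral_mono_on hs (intervalIntegrable_charKernel hq hP hQc lam s 0 s)
          (Continuous.intervalIntegrable (by fun_prop) 0 s) fun y hy => ?_
        rw [charKernel, Real.exp_add, ← mul_assoc, mul_comm (Real.exp B)]
        exact mul_le_mul_of_nonneg_left (Real.exp_le_exp.2 (hB y hy))
          (mul_pos (hqpos y) (Real.exp_pos _)).le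
    _ = Real.exp B * ((1 - Real.exp (lam * (Q 0 - Q s))) / lam) := by
        rw [intervalIntegral.integral_const_mul, integral_mul_exp_mul_sub hq hQ hlam.ne']
    _ ≤ Real.exp B / lam := by
        rw [mul_div_assoc']
        gcongr
        exact mul_le_of_le_one_right (Real.exp_pos B).le
          (by linarith [Real.exp_pos (lam * (Q 0 - Q s))])

theorem tendsto_charIntegral_atTop {m : ℝ} (hm : 0 ≤ m) :
    Tendsto (charIntegral q Q P m) atTop (nhds 0) := by
  have hQc : Continuous Q := Differentiable.continuous fun x => (hQ x).differentiableAt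
  obtain ⟨C, hC⟩ := isCompact_Icc.exists_bound_of_continuousOn (hP.continuousOn (s := Icc 0 m))
  have hosc : ∀ s ∈ Icc 0 m, ∀ y ∈ Icc 0 s, P y - P s ≤ 2 * C := fun s hs y hy => by
    have hPy := abs_le.1 (hC y ⟨hy.1, hy.2.trans hs.2⟩)
    have hPs := abs_le.1 (hC s hs)
    linarith [hPy.2, hPs.1]
  have hnonneg : ∀ lam, 0 ≤ charIntegral q Q P m lam := fun lam =>
    integral_nonneg hm fun s hs => integral_nonneg hs.1 fun y _ =>
      (mul_pos (hqpos y) (Real.exp_pos _)).le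
  have hle : ∀ lam > 0, charIntegral q Q P m lam ≤ m * Real.exp (2 * C) / lam := fun lam hlam =>
    calc charIntegral q Q P m lam ≤ ∫ _ in (0:ℝ)..m, Real.exp (2 * C) / lam :=
          integral_mono_on hm (intervalIntegrable_integral_charKernel hq hP hQc lam 0 m)
            intervalIntegrable_const fun s hs =>
              integral_charKernel_le hq hP hQ hqpos hs.1 hlam (hosc s hs)
      _ = m * Real.exp (2 * C) / lam := by
          rw [intervalIntegral.integral_const, smul_eq_mul, sub_zero, mul_div]
  exact tendsto_of_tendsto_of_tendsto_of_le_of_le' tendsto_const_nhds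
    (tendsto_const_nhds.div_atTop tendsto_id) (Eventually.of_forall hnonneg)
    ((eventually_gt_atTop 0).mono hle)

end charIntegral

theorem integral_exp_neg_integral_eq_charIntegral {f g q p : ℝ → ℝ} {m lam : ℝ}
    (hm : 0 ≤ m) (hq : Continuous q) (hp : Continuous p)
    (hf : EqOn f (fun σ => lam * q σ + p σ) (Icc 0 m)) (hg : EqOn g q (Icc 0 m)) :
    ∫ s in (0:ℝ)..m, Real.exp (-∫ σ in (0:ℝ)..s, f σ) *
      ∫ y in (0:ℝ)..s, g y * Real.exp (∫ σ in (0:ℝ)..y, f σ) =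
    charIntegral q (fun x => ∫ t in (0:ℝ)..x, q t) (fun x => ∫ t in (0:ℝ)..x, p t) m lam := by
  have hsub : ∀ {x}, x ∈ Icc 0 m → uIcc 0 x ⊆ Icc 0 m := fun hx => by
    rw [uIcc_of_le hx.1]; exact Icc_subset_Icc le_rfl hx.2
  have hF : ∀ x ∈ Icc 0 m,
      ∫ σ in (0:ℝ)..x, f σ = lam * (∫ t in (0:ℝ)..x, q t) + ∫ t in (0:ℝ)..x, p t := by
    intro x hx
    rw [integral_congr (hf.mono (hsub hx)), integral_add ((hq.intervalIntegrable 0 x).const_mul lam)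
      (hp.intervalIntegrable 0 x), intervalIntegral.integral_const_mul]
  refine integral_congr fun s hs => ?_
  rw [uIcc_of_le hm] at hs
  rw [hF s hs, integral_charKernel_eq]
  congr 1
  refine integral_congr fun y hy => ?_
  rw [hg (hsub hs hy), hF y (hsub hs hy)]

theorem characteristic_equation_rank_one_general (m : ℝ) (hm : 0 < m)
    (γ γ' μ : ℝ → ℝ)
    (hγd : ∀ s ∈ Icc (0:ℝ) m, HasDerivWithinAt γ (γ' s) (Icc 0 m) s)
    (hγ'c : ContinuousOn γ' (Icc 0 m))
    (hγpos : ∀ s ∈ Icc (0:ℝ) m, 0 < γ s)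
    (hμc : ContinuousOn μ (Icc 0 m))
    (ε : ℝ) (hε : 0 < ε)
    (K : ℝ → ℝ)
    (hK : ∀ lam, K lam = ε * ∫ s in (0:ℝ)..m,
      Real.exp (-∫ σ in (0:ℝ)..s, (lam + γ' σ + μ σ) / γ σ) *
      ∫ y in (0:ℝ)..s, (1 / γ y) *
        Real.exp (∫ σ in (0:ℝ)..y, (lam + γ' σ + μ σ) / γ σ)) :
    StrictAnti K ∧
    Tendsto K atTop (nhds 0) ∧
    (1 < K 0 → ∃! lam : ℝ, 0 < lam ∧ K lam = 1) := by
  have hγc : ContinuousOn γ (Icc 0 m) := fun s hs => (hγd s hs).continuousWithinAt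
  have hγ₀ : ∀ s ∈ Icc 0 m, γ s ≠ 0 := fun s hs => (hγpos s hs).ne'
  obtain ⟨q, hq, hqγ, hq_mem⟩ :=
    (continuousOn_const.div hγc hγ₀).exists_continuous_eqOn_Icc (f := fun s => 1 / γ s) hm.le
  obtain ⟨p, hp, hpγ, -⟩ := ((hγ'c.add hμc).div hγc hγ₀).exists_continuous_eqOn_Icc hm.le
  have hqpos : ∀ x, 0 < q x := fun x => by
    obtain ⟨s, hs, hsx⟩ := hq_mem x
    exact hsx ▸ one_div_pos.2 (hγpos s hs)
  have hQ : ∀ x, HasDerivAt (fun x => ∫ t in (0:ℝ)..x, q t) (q x) x := fun x =>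
    (hq.integral_hasStrictDerivAt 0 x).hasDerivAt
  have hP : Continuous fun x => ∫ t in (0:ℝ)..x, p t :=
    continuous_primitive (fun a b => hp.intervalIntegrable a b) 0
  obtain rfl : K = fun lam => ε * charIntegral q (fun x => ∫ t in (0:ℝ)..x, q t)
      (fun x => ∫ t in (0:ℝ)..x, p t) m lam := funext fun lam => by
    rw [hK lam, integral_exp_neg_integral_eq_charIntegral hm.le hq hp (fun σ hσ => ?_) hqγ.symm]
    simp only [hqγ hσ, hpγ hσ, Pi.div_apply, Pi.add_apply]
    field_simp [hγ₀ σ hσ]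
    ring
  have hanti := (charIntegral_strictAnti hq hP hQ hqpos hm).const_mul hε
  have hlim := (tendsto_charIntegral_atTop hq hP hQ hqpos hm.le).const_mul ε
  rw [mul_zero] at hlim
  exact ⟨hanti, hlim, hanti.existsUnique_pos_eq_of_tendsto
    (continuous_const.mul (continuous_charIntegral hq hP
      (Differentiable.continuous fun x => (hQ x).differentiableAt) m)) hlim one_pos⟩

/-- The characteristic function of the rank-one perturbed transport operator
`(A+B+F_ε)u = −(γu)' − μu + ε∫_0^m u` is strictly decreasing, tends to `0` at
`+∞`, and if `K(0) > 1` then `K(λ) = 1` has a unique positive solution. -/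
theorem characteristic_equation_rank_one (m : ℝ) (hm : 0 < m)
    (γ γ' μ : ℝ → ℝ)
    (hγd : ∀ s ∈ Icc (0:ℝ) m, HasDerivWithinAt γ (γ' s) (Icc 0 m) s)
    (hγ'c : ContinuousOn γ' (Icc 0 m))
    (hγpos : ∀ s ∈ Icc (0:ℝ) m, 0 < γ s)
    (hμc : ContinuousOn μ (Icc 0 m)) (hμnn : ∀ s ∈ Icc (0:ℝ) m, 0 ≤ μ s)
    (ε : ℝ) (hε : 0 < ε)
    (K : ℝ → ℝ)
    (hK : ∀ lam, K lam = ε * ∫ s in (0:ℝ)..m,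
      Real.exp (-∫ σ in (0:ℝ)..s, (lam + γ' σ + μ σ) / γ σ) *
      ∫ y in (0:ℝ)..s, (1 / γ y) *
        Real.exp (∫ σ in (0:ℝ)..y, (lam + γ' σ + μ σ) / γ σ)) :
    StrictAnti K ∧
    Tendsto K atTop (nhds 0) ∧
    (1 < K 0 → ∃! lam : ℝ, 0 < lam ∧ K lam = 1) :=
  characteristic_equation_rank_one_general m hm γ γ' μ hγd hγ'c hγpos hμc ε hε K hK
end

section
/- Let k : [0,m] × [0,m] → ℝ be continuous with k ≥ 0, and set ω = max_{y ∈ [0,m]} ∫_0^m k(s,y) ds. Then for every continuously differentiable u : [0,m] → ℝ with u(0) = 0, one has ∫_0^m 1_{{u(s) > 0}} · ( −(γu)'(s) − μ(s)u(s) + ∫_0^m k(s,y)u(y) dy − ω u(s) ) ds ≤ 0; i.e., the operator u ↦ −(γu)' − μu + ∫_0^m k(·,y)u(y) dy − ωu, with boundary condition u(0)=0, is dispersive on L^1(0,m). -/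
/-!
Put `v = γ u`. Since `γ > 0`, the sets `{u > 0}` and `{v > 0}` coincide, and the transport
term is `-∫_{v > 0} v'`. Approximating `1_{t > 0}` by the continuous ramps
`φₙ t = max 0 (min (n t) 1)`, the substitution `t = v s` gives `∫ φₙ(v) v' = ∫_{v 0}^{v m} φₙ ≥ 0`,
because `v 0 = 0` and `φₙ` vanishes on `(-∞, 0]`; dominated convergence yields `∫_{v > 0} v' ≥ 0`.
The loss term `-μ u` is nonpositive on `{u > 0}`. For the integral term, on `{u > 0}` we have
`∫ k(s,y) u(y) dy - ω u(s) ≤ ∫ k(s,y) u⁺(y) dy - ω u⁺(s)`, and the right side is nonnegative off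
`{u > 0}`; integrating in `s` and exchanging the order of integration,
`∫∫ k(s,y) u⁺(y) dy ds ≤ ω ∫ u⁺` by the definition of `ω`.
-/

open Set MeasureTheory intervalIntegral Filter Topology Function

noncomputable def ramp (n : ℕ) (t : ℝ) : ℝ := max 0 (min (n * t) 1)

lemma continuous_ramp (n : ℕ) : Continuous (ramp n) := by
  unfold ramp; fun_prop

lemma ramp_nonneg (n : ℕ) (t : ℝ) : 0 ≤ ramp n t := le_max_left _ _

lemma ramp_le_one (n : ℕ) (t : ℝ) : ramp n t ≤ 1 := max_le zero_le_one (min_le_right _ _)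

lemma ramp_of_nonpos (n : ℕ) {t : ℝ} (ht : t ≤ 0) : ramp n t = 0 :=
  max_eq_left <| (min_le_left _ _).trans (mul_nonpos_of_nonneg_of_nonpos n.cast_nonneg ht)

lemma tendsto_ramp (t : ℝ) :
    Tendsto (fun n => ramp n t) atTop (𝓝 (if 0 < t then 1 else 0)) := by
  split_ifs with ht
  · refine tendsto_const_nhds.congr' ?_
    filter_upwards [(tendsto_natCast_atTop_atTop.atTop_mul_const ht).eventually_ge_atTop 1]
      with n hn
    rw [ramp, min_eq_right hn, max_eq_right zero_le_one]
  · simp only [ramp_of_nonpos _ (not_lt.1 ht), tendsto_const_nhds]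

lemma integral_nonneg_of_lower_nonpos {g : ℝ → ℝ} (hg0 : ∀ t, 0 ≤ g t)
    (hg : ∀ t ≤ 0, g t = 0) {c d : ℝ} (hc : c ≤ 0) : 0 ≤ ∫ t in c..d, g t := by
  rcases le_total c d with hcd | hdc
  · exact integral_nonneg hcd fun t _ => hg0 t
  · rw [integral_symm, integral_congr (g := 0) fun t ht => hg t ?_]
    · simp
    · rw [uIcc_of_le hdc] at ht
      exact ht.2.trans hc

theorem integral_indicator_pos_deriv_nonneg {v v' : ℝ → ℝ} {a b : ℝ} (hab : a ≤ b)
    (hv : ∀ s ∈ Icc a b, HasDerivWithinAt v (v' s) (Icc a b) s)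
    (hv' : ContinuousOn v' (Icc a b)) (ha : v a ≤ 0) :
    0 ≤ ∫ s in a..b, {x | 0 < v x}.indicator v' s := by
  have hvc : ContinuousOn v (Icc a b) := fun s hs => (hv s hs).continuousWithinAt
  have happrox (n : ℕ) : 0 ≤ ∫ s in a..b, ramp n (v s) * v' s := by
    rw [← uIcc_of_le hab] at hvc hv'
    have hsubst := integral_comp_mul_deriv'' (g := ramp n) hvc
      (fun s hs => by
        rw [min_eq_left hab, max_eq_right hab] at hs
        exact ((hv s (Ioo_subset_Icc_self hs)).hasDerivAt
          (Icc_mem_nhds hs.1 hs.2)).hasDerivWithinAt)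
      hv' (continuous_ramp n).continuousOn
    rw [comp_def] at hsubst
    rw [hsubst]
    exact integral_nonneg_of_lower_nonpos (ramp_nonneg n) (fun t => ramp_of_nonpos n) ha
  have hlim : Tendsto (fun n : ℕ => ∫ s in a..b, ramp n (v s) * v' s) atTop
      (𝓝 (∫ s in a..b, {x | 0 < v x}.indicator v' s)) := by
    refine tendsto_integral_filter_of_dominated_convergence (fun s => |v' s|) ?_ ?_ ?_ ?_
    · refine .of_forall fun n => ContinuousOn.aestronglyMeasurable ?_ measurableSet_uIoc
      rw [uIoc_of_le hab]
      exact (((continuous_ramp n).comp_continuousOn hvc).mul hv').mono Ioc_subset_Icc_self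
    · refine .of_forall fun n => .of_forall fun s _ => ?_
      rw [norm_mul, Real.norm_of_nonneg (ramp_nonneg n _), Real.norm_eq_abs]
      exact mul_le_of_le_one_left (abs_nonneg _) (ramp_le_one n _)
    · exact (hv'.intervalIntegrable_of_Icc hab).abs
    · refine .of_forall fun s _ => ?_
      by_cases h : 0 < v s <;> simpa [h] using (tendsto_ramp (v s)).mul_const (v' s)
  exact ge_of_tendsto' hlim happrox

lemma IntervalIntegrable.indicator_setOf_pos {f u : ℝ → ℝ} {a b : ℝ}
    (hf : IntervalIntegrable f volume a b) (hu : ContinuousOn u (uIcc a b)) :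
    IntervalIntegrable ({x | 0 < u x}.indicator f) volume a b := by
  rw [intervalIntegrable_iff] at hf ⊢
  exact hf.indicator₀ <| nullMeasurableSet_lt aemeasurable_const
    ((hu.mono uIoc_subset_uIcc).aemeasurable measurableSet_uIoc)

section Fubini

variable {F : ℝ → ℝ → ℝ} {a b c d : ℝ}

lemma IntegrableOn.intervalIntegrable_integral_left (hab : a ≤ b) (hcd : c ≤ d)
    (hF : IntegrableOn (uncurry F) (Ioc a b ×ˢ Ioc c d)) :
    IntervalIntegrable (fun x => ∫ y in c..d, F x y) volume a b := by
  rw [IntegrableOn, Measure.volume_eq_prod, ← Measure.prod_restrict] at hF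
  simpa only [intervalIntegrable_iff_integrableOn_Ioc_of_le hab, IntegrableOn,
    integral_of_le hcd, uncurry_apply_pair] using hF.integral_prod_left

lemma IntegrableOn.intervalIntegrable_integral_right (hab : a ≤ b) (hcd : c ≤ d)
    (hF : IntegrableOn (uncurry F) (Ioc a b ×ˢ Ioc c d)) :
    IntervalIntegrable (fun y => ∫ x in a..b, F x y) volume c d := by
  rw [IntegrableOn, Measure.volume_eq_prod, ← Measure.prod_restrict] at hF
  simpa only [intervalIntegrable_iff_integrableOn_Ioc_of_le hcd, IntegrableOn,
    integral_of_le hab, uncurry_apply_pair] using hF.integral_prod_right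

lemma intervalIntegral_intervalIntegral_swap_of_le (hab : a ≤ b) (hcd : c ≤ d)
    (hF : IntegrableOn (uncurry F) (Ioc a b ×ˢ Ioc c d)) :
    ∫ x in a..b, ∫ y in c..d, F x y = ∫ y in c..d, ∫ x in a..b, F x y := by
  rw [intervalIntegral_intervalIntegral_swap]
  rwa [uIoc_of_le hab, uIoc_of_le hcd]

end Fubini

section Kernel

variable {k : ℝ → ℝ → ℝ} {a b : ℝ}

lemma integrableOn_kernel_mul (hk : ContinuousOn (uncurry k) (Icc a b ×ˢ Icc a b))
    {w : ℝ → ℝ} (hw : ContinuousOn w (Icc a b)) :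
    IntegrableOn (uncurry fun s y => k s y * w y) (Ioc a b ×ˢ Ioc a b) :=
  ((hk.mul (hw.comp continuous_snd.continuousOn fun _ hq => hq.2)).integrableOn_compact
    (isCompact_Icc.prod isCompact_Icc)).mono_set
    (prod_mono Ioc_subset_Icc_self Ioc_subset_Icc_self)

lemma intervalIntegrable_kernel_mul (hab : a ≤ b)
    (hk : ContinuousOn (uncurry k) (Icc a b ×ˢ Icc a b)) {w : ℝ → ℝ}
    (hw : ContinuousOn w (Icc a b)) :
    IntervalIntegrable (fun s => ∫ y in a..b, k s y * w y) volume a b :=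
  IntegrableOn.intervalIntegrable_integral_left hab hab (integrableOn_kernel_mul hk hw)

lemma integral_kernel_mul_mono (hab : a ≤ b)
    (hk : ContinuousOn (uncurry k) (Icc a b ×ˢ Icc a b)) {s : ℝ} (hs : s ∈ Icc a b)
    (hks : ∀ y ∈ Icc a b, 0 ≤ k s y) {w₁ w₂ : ℝ → ℝ} (hw₁ : ContinuousOn w₁ (Icc a b))
    (hw₂ : ContinuousOn w₂ (Icc a b)) (hw : ∀ y ∈ Icc a b, w₁ y ≤ w₂ y) :
    ∫ y in a..b, k s y * w₁ y ≤ ∫ y in a..b, k s y * w₂ y := by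
  have hk_s : ContinuousOn (k s) (Icc a b) :=
    hk.comp (Continuous.prodMk_right s).continuousOn fun _ hy => ⟨hs, hy⟩
  exact integral_mono_on hab ((hk_s.mul hw₁).intervalIntegrable_of_Icc hab)
    ((hk_s.mul hw₂).intervalIntegrable_of_Icc hab)
    fun y hy => mul_le_mul_of_nonneg_left (hw y hy) (hks y hy)

lemma integral_integral_kernel_mul_le (hab : a ≤ b)
    (hk : ContinuousOn (uncurry k) (Icc a b ×ˢ Icc a b)) {ω : ℝ}
    (hω : ∀ y ∈ Icc a b, ∫ s in a..b, k s y ≤ ω) {w : ℝ → ℝ} (hw : ContinuousOn w (Icc a b))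
    (hw0 : ∀ y ∈ Icc a b, 0 ≤ w y) :
    ∫ s in a..b, ∫ y in a..b, k s y * w y ≤ ω * ∫ y in a..b, w y := by
  have hkw := integrableOn_kernel_mul hk hw
  rw [intervalIntegral_intervalIntegral_swap_of_le hab hab hkw,
    ← intervalIntegral.integral_const_mul]
  refine integral_mono_on hab (IntegrableOn.intervalIntegrable_integral_right hab hab hkw)
    ((hw.intervalIntegrable_of_Icc hab).const_mul ω) fun y hy => ?_
  rw [intervalIntegral.integral_mul_const]
  exact mul_le_mul_of_nonneg_right (hω y hy) (hw0 y hy)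

theorem integral_indicator_pos_kernel_sub_le (hab : a ≤ b)
    (hk : ContinuousOn (uncurry k) (Icc a b ×ˢ Icc a b))
    (hk0 : ∀ s ∈ Icc a b, ∀ y ∈ Icc a b, 0 ≤ k s y) {ω : ℝ}
    (hω : ∀ y ∈ Icc a b, ∫ s in a..b, k s y ≤ ω) {u : ℝ → ℝ} (hu : ContinuousOn u (Icc a b)) :
    ∫ s in a..b, {x | 0 < u x}.indicator (fun s => (∫ y in a..b, k s y * u y) - ω * u s) s
      ≤ 0 := by
  set up := fun s => max (u s) 0
  have hup : ContinuousOn up (Icc a b) := hu.sup continuousOn_const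
  have hωint {w : ℝ → ℝ} (hw : ContinuousOn w (Icc a b)) :=
    (hw.intervalIntegrable_of_Icc (μ := volume) hab).const_mul ω
  have hpt : ∀ s ∈ Icc a b, {x | 0 < u x}.indicator
      (fun s => (∫ y in a..b, k s y * u y) - ω * u s) s
      ≤ (∫ y in a..b, k s y * up y) - ω * up s := by
    intro s hs
    by_cases hus : 0 < u s
    · rw [indicator_of_mem (show s ∈ {x | 0 < u x} from hus),
        show up s = u s from max_eq_left hus.le]
      exact sub_le_sub_right (integral_kernel_mul_mono hab hk hs (hk0 s hs) hu hup
        fun y _ => le_max_left (u y) 0) _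
    · rw [indicator_of_notMem (show s ∉ {x | 0 < u x} from hus),
        show up s = 0 from max_eq_right (not_lt.1 hus), mul_zero, sub_zero]
      exact integral_nonneg hab fun y hy => mul_nonneg (hk0 s hs y hy) (le_max_right (u y) 0)
  have hKup := intervalIntegrable_kernel_mul hab hk hup
  calc _ ≤ ∫ s in a..b, (∫ y in a..b, k s y * up y) - ω * up s :=
        integral_mono_on hab (((intervalIntegrable_kernel_mul hab hk hu).sub
          (hωint hu)).indicator_setOf_pos (hu.mono (uIcc_of_le hab).subset))
          (hKup.sub (hωint hup)) hpt
    _ = (∫ s in a..b, ∫ y in a..b, k s y * up y) - ω * ∫ s in a..b, up s := by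
        rw [integral_sub hKup (hωint hup), intervalIntegral.integral_const_mul]
    _ ≤ 0 := sub_nonpos.2 <|
        integral_integral_kernel_mul_le hab hk hω hup fun y _ => le_max_right (u y) 0

end Kernel

/-- Dispersivity estimate: with `ω` the maximum over `y ∈ [0,m]` of
`∫_0^m k(s,y) ds`, the shifted linearised operator
`u ↦ −(γu)' − μu + ∫_0^m k(·,y)u(y) dy − ωu` with boundary condition `u(0) = 0`
is dispersive on `L¹(0,m)`. -/
theorem dispersivity_estimate (m : ℝ) (hm : 0 < m)
    (γ γ' μ : ℝ → ℝ)
    (hγd : ∀ s ∈ Icc (0:ℝ) m, HasDerivWithinAt γ (γ' s) (Icc 0 m) s)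
    (hγ'c : ContinuousOn γ' (Icc 0 m))
    (hγpos : ∀ s ∈ Icc (0:ℝ) m, 0 < γ s)
    (hμc : ContinuousOn μ (Icc 0 m)) (hμnn : ∀ s ∈ Icc (0:ℝ) m, 0 ≤ μ s)
    (k : ℝ → ℝ → ℝ)
    (hkc : ContinuousOn (fun q : ℝ × ℝ => k q.1 q.2) (Icc 0 m ×ˢ Icc 0 m))
    (hknn : ∀ s ∈ Icc (0:ℝ) m, ∀ y ∈ Icc (0:ℝ) m, 0 ≤ k s y)
    (ω : ℝ)
    (hω : IsGreatest ((fun y => ∫ s in (0:ℝ)..m, k s y) '' Icc (0:ℝ) m) ω)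
    (u u' : ℝ → ℝ)
    (hu'c : ContinuousOn u' (Icc 0 m))
    (hud : ∀ s ∈ Icc (0:ℝ) m, HasDerivWithinAt u (u' s) (Icc 0 m) s)
    (hu0 : u 0 = 0) :
    (∫ s in (0:ℝ)..m, Set.indicator {x : ℝ | 0 < u x}
      (fun s => -(γ' s * u s + γ s * u' s) - μ s * u s
        + (∫ y in (0:ℝ)..m, k s y * u y) - ω * u s) s) ≤ 0 := by
  have hm0 := hm.le
  have hsub : uIcc 0 m ⊆ Icc 0 m := (uIcc_of_le hm0).subset
  have huc : ContinuousOn u (Icc 0 m) := fun s hs => (hud s hs).continuousWithinAt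
  have hγc : ContinuousOn γ (Icc 0 m) := fun s hs => (hγd s hs).continuousWithinAt
  set v' := fun s => γ' s * u s + γ s * u' s
  have hv'c : ContinuousOn v' (Icc 0 m) := (hγ'c.mul huc).add (hγc.mul hu'c)
  have hK := intervalIntegrable_kernel_mul hm0 hkc huc
  have hωu := (huc.intervalIntegrable_of_Icc (μ := volume) hm0).const_mul ω
  set transport := {x | 0 < (γ * u) x}.indicator v'
  set nonlocal := {x | 0 < u x}.indicator fun s => (∫ y in (0:ℝ)..m, k s y * u y) - ω * u s
  have htransport : IntervalIntegrable transport volume 0 m :=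
    (hv'c.intervalIntegrable_of_Icc hm0).indicator_setOf_pos ((hγc.mul huc).mono hsub)
  have hnonlocal : IntervalIntegrable nonlocal volume 0 m :=
    (hK.sub hωu).indicator_setOf_pos (huc.mono hsub)
  have hpt : ∀ s ∈ Icc (0:ℝ) m, {x | 0 < u x}.indicator (fun s => -v' s - μ s * u s
      + (∫ y in (0:ℝ)..m, k s y * u y) - ω * u s) s ≤ -transport s + nonlocal s := by
    intro s hs
    simp only [transport, nonlocal, indicator_apply, Set.mem_ofPred_eq, Pi.mul_apply,
      mul_pos_iff_of_pos_left (hγpos s hs)]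
    split_ifs <;> nlinarith [hμnn s hs]
  have hintegrand := (((hv'c.intervalIntegrable_of_Icc hm0).neg.sub
    ((hμc.mul huc).intervalIntegrable_of_Icc hm0)).add hK).sub hωu
  calc _ ≤ ∫ s in (0:ℝ)..m, -transport s + nonlocal s :=
        integral_mono_on hm0 (hintegrand.indicator_setOf_pos (huc.mono hsub))
          (htransport.neg.add hnonlocal) hpt
    _ = -(∫ s in (0:ℝ)..m, transport s) + ∫ s in (0:ℝ)..m, nonlocal s := by
        rw [integral_add (f := fun s => -_) htransport.neg hnonlocal, intervalIntegral.integral_neg]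
    _ ≤ 0 := add_nonpos
        (neg_nonpos.2 <| integral_indicator_pos_deriv_nonneg hm0
          (fun s hs => (hγd s hs).mul (hud s hs)) hv'c (by simp [hu0]))
        (integral_indicator_pos_kernel_sub_le hm0 hkc hknn (fun y hy => hω.2 ⟨y, hy, rfl⟩) huc)
end
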